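/- Let X and Y be Polish spaces, c a cost function on Y, and f : X → Y a measurable function. Let c_f denote the induced cost function on X defined by c_f(x, x') = c(f(x), f(x')). Then for any probability measures μ, ν on X, the optimal transport costs satisfy T_c(f_*μ, f_*ν) = T_{c_f}(μ, ν). -/

import Mathlib

/-!
Pushing a coupling of `μ` and `ν` forward by `f × f` gives a coupling of `f_*μ` and `f_*ν` with
the same cost, so `T_c(f_*μ, f_*ν) ≤ T_{c_f}(μ, ν)`. Conversely, disintegrate `μ` along `f` into a
kernel `κ` with `κ y` carried by the fibre `f⁻¹{y}`, and `ν` likewise into `η`. Given a coupling `γ`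
of `f_*μ` and `f_*ν`, the measure `(κ ∥ η) ∘ γ` is a coupling of `μ` and `ν`; its image under
`f × f` is `γ` again, so its `c_f`-cost is the `c`-cost of `γ`.
-/

open MeasureTheory ENNReal Filter Topology

/-- The optimal transport cost between two measures `μ` and `ν` on a space `Z`
with base cost `c`. -/
noncomputable def otCost {Z : Type*} [MeasurableSpace Z]
    (c : Z → Z → ℝ≥0∞) (μ ν : Measure Z) : ℝ≥0∞ :=
  ⨅ (π : Measure (Z × Z)) (_ : π.map Prod.fst = μ ∧ π.map Prod.snd = ν),
    ∫⁻ p, c p.1 p.2 ∂π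

open ProbabilityTheory

section
variable {X Y : Type*} [MeasurableSpace X] [MeasurableSpace Y]

lemma MeasureTheory.Measure.map_fst_parallelComp_comp {Z W : Type*}
    [MeasurableSpace Z] [MeasurableSpace W]
    (κ : Kernel X Z) (η : Kernel Y W) [IsSFiniteKernel κ] [IsMarkovKernel η]
    (γ : Measure (X × Y)) :
    ((κ ∥ₖ η) ∘ₘ γ).map Prod.fst = κ ∘ₘ γ.map Prod.fst := by
  ext s hs
  rw [Measure.map_apply measurable_fst hs,
    Measure.bind_apply (measurable_fst hs) (Kernel.aemeasurable _),
    Measure.bind_apply hs (Kernel.aemeasurable _),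
    lintegral_map (κ.measurable_coe hs) measurable_fst]
  congr 1 with p
  rw [← Set.prod_univ, Kernel.parallelComp_apply_prod, measure_univ, mul_one]

lemma MeasureTheory.Measure.map_snd_parallelComp_comp {Z W : Type*}
    [MeasurableSpace Z] [MeasurableSpace W]
    (κ : Kernel X Z) (η : Kernel Y W) [IsMarkovKernel κ] [IsSFiniteKernel η]
    (γ : Measure (X × Y)) :
    ((κ ∥ₖ η) ∘ₘ γ).map Prod.snd = η ∘ₘ γ.map Prod.snd := by
  ext s hs
  rw [Measure.map_apply measurable_snd hs,
    Measure.bind_apply (measurable_snd hs) (Kernel.aemeasurable _),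
    Measure.bind_apply hs (Kernel.aemeasurable _),
    lintegral_map (η.measurable_coe hs) measurable_snd]
  congr 1 with p
  rw [← Set.univ_prod, Kernel.parallelComp_apply_prod, measure_univ, one_mul]

lemma MeasureTheory.Measure.map_comp_eq_of_ae_ae_eq {κ : Kernel Y X} [IsMarkovKernel κ]
    {f : X → Y} (hf : Measurable f) {γ : Measure Y}
    (hκ : ∀ᵐ y ∂γ, ∀ᵐ x ∂κ y, f x = y) :
    (κ ∘ₘ γ).map f = γ := by
  rw [Measure.map_comp _ _ hf]
  calc κ.map f ∘ₘ γ = Kernel.id ∘ₘ γ := by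
        refine Measure.comp_congr ?_
        filter_upwards [hκ] with y hy
        rw [Kernel.map_apply _ hf, Measure.map_congr hy, Measure.map_const, measure_univ, one_smul,
          Kernel.id_apply]
    _ = γ := Measure.id_comp

lemma condDistrib_id_comp_map [StandardBorelSpace X] [Nonempty X] {f : X → Y}
    (hf : Measurable f) (μ : Measure X) [IsFiniteMeasure μ] :
    condDistrib id f μ ∘ₘ μ.map f = μ := by
  rw [condDistrib_comp_map hf.aemeasurable aemeasurable_id, Measure.map_id]

lemma ae_ae_condDistrib_id_eq [StandardBorelSpace X] [Nonempty X] [MeasurableEq Y] {f : X → Y}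
    (hf : Measurable f) (μ : Measure X) [IsFiniteMeasure μ] :
    ∀ᵐ y ∂μ.map f, ∀ᵐ x ∂condDistrib id f μ y, f x = y := by
  refine Measure.ae_ae_of_ae_compProd (p := fun p : Y × X => f p.2 = p.1) ?_
  rw [compProd_map_condDistrib aemeasurable_id]
  exact (ae_map_iff (hf.prodMk measurable_id).aemeasurable
    (measurableSet_eq_fun (hf.comp measurable_snd) measurable_fst)).2 (ae_of_all _ fun _ => rfl)

lemma otCost_le_lintegral {c : X → X → ℝ≥0∞} {μ ν : Measure X} (π : Measure (X × X))
    (h₁ : π.map Prod.fst = μ) (h₂ : π.map Prod.snd = ν) :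
    otCost c μ ν ≤ ∫⁻ p, c p.1 p.2 ∂π :=
  iInf₂_le π ⟨h₁, h₂⟩

lemma otCost_map_le {c : Y → Y → ℝ≥0∞} (hc : Measurable (Function.uncurry c))
    {f : X → Y} (hf : Measurable f) (μ ν : Measure X) :
    otCost c (μ.map f) (ν.map f) ≤ otCost (fun x x' => c (f x) (f x')) μ ν := by
  refine le_iInf₂ fun π hπ => ?_
  have hff : Measurable (Prod.map f f) := hf.prodMap hf
  calc otCost c (μ.map f) (ν.map f)
      ≤ ∫⁻ p, c p.1 p.2 ∂(π.map (Prod.map f f)) := by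
        refine otCost_le_lintegral _ ?_ ?_
        · rw [Measure.map_map measurable_fst hff, ← hπ.1, Measure.map_map hf measurable_fst]
          rfl
        · rw [Measure.map_map measurable_snd hff, ← hπ.2, Measure.map_map hf measurable_snd]
          rfl
    _ = ∫⁻ p, c (f p.1) (f p.2) ∂π := lintegral_map hc hff

lemma otCost_induced_le_otCost_map_of_disintegration {c : Y → Y → ℝ≥0∞}
    (hc : Measurable (Function.uncurry c)) {f : X → Y} (hf : Measurable f) {μ ν : Measure X}
    {κ η : Kernel Y X} [IsMarkovKernel κ] [IsMarkovKernel η]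
    (hκμ : κ ∘ₘ μ.map f = μ) (hην : η ∘ₘ ν.map f = ν)
    (hκ : ∀ᵐ y ∂μ.map f, ∀ᵐ x ∂κ y, f x = y) (hη : ∀ᵐ y ∂ν.map f, ∀ᵐ x ∂η y, f x = y) :
    otCost (fun x x' => c (f x) (f x')) μ ν ≤ otCost c (μ.map f) (ν.map f) := by
  refine le_iInf₂ fun γ hγ => ?_
  have hff : Measurable (Prod.map f f) := hf.prodMap hf
  have hsection : ∀ᵐ p ∂γ, ∀ᵐ q ∂(κ ∥ₖ η) p, Prod.map f f q = p := by
    filter_upwards [ae_of_ae_map measurable_fst.aemeasurable (hγ.1 ▸ hκ),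
      ae_of_ae_map measurable_snd.aemeasurable (hγ.2 ▸ hη)] with p h₁ h₂
    rw [Kernel.parallelComp_apply]
    filter_upwards [Measure.quasiMeasurePreserving_fst.ae h₁,
      Measure.quasiMeasurePreserving_snd.ae h₂] with q hq₁ hq₂
    exact Prod.ext hq₁ hq₂
  calc otCost (fun x x' => c (f x) (f x')) μ ν
      ≤ ∫⁻ q, c (f q.1) (f q.2) ∂((κ ∥ₖ η) ∘ₘ γ) := by
        refine otCost_le_lintegral _ ?_ ?_
        · rw [Measure.map_fst_parallelComp_comp, hγ.1, hκμ]
        · rw [Measure.map_snd_parallelComp_comp, hγ.2, hην]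
    _ = ∫⁻ p, c p.1 p.2 ∂(((κ ∥ₖ η) ∘ₘ γ).map (Prod.map f f)) :=
        (lintegral_map hc hff).symm
    _ = ∫⁻ p, c p.1 p.2 ∂γ := by rw [Measure.map_comp_eq_of_ae_ae_eq hff hsection]

end

theorem otCost_map_eq_otCost_induced_general
    {X Y : Type*} [TopologicalSpace X] [PolishSpace X] [MeasurableSpace X] [BorelSpace X]
    [TopologicalSpace Y] [PolishSpace Y] [MeasurableSpace Y] [BorelSpace Y]
    (c : Y → Y → ℝ≥0∞)
    (hc_lsc : LowerSemicontinuous (Function.uncurry c))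
    (f : X → Y) (hf : Measurable f)
    (μ ν : Measure X) [IsProbabilityMeasure μ] [IsProbabilityMeasure ν] :
    otCost c (μ.map f) (ν.map f) = otCost (fun x x' => c (f x) (f x')) μ ν := by
  have hc : Measurable (Function.uncurry c) := hc_lsc.measurable
  have : Nonempty X := nonempty_of_isProbabilityMeasure μ
  exact le_antisymm (otCost_map_le hc hf μ ν) <|
    otCost_induced_le_otCost_map_of_disintegration hc hf
      (condDistrib_id_comp_map hf μ) (condDistrib_id_comp_map hf ν)
      (ae_ae_condDistrib_id_eq hf μ) (ae_ae_condDistrib_id_eq hf ν)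

/-- For a measurable map `f : X → Y` between Polish spaces and a cost
function `c` on `Y`, the optimal transport cost satisfies
`T_c(f_*μ, f_*ν) = T_{c_f}(μ, ν)`, where `c_f(x, x') = c(f x, f x')`. -/
theorem otCost_map_eq_otCost_induced
    {X Y : Type*} [TopologicalSpace X] [PolishSpace X] [MeasurableSpace X] [BorelSpace X]
    [TopologicalSpace Y] [PolishSpace Y] [MeasurableSpace Y] [BorelSpace Y]
    (c : Y → Y → ℝ≥0∞)
    (hc_lsc : LowerSemicontinuous (Function.uncurry c))
    (hc_symm : ∀ y₁ y₂, c y₁ y₂ = c y₂ y₁)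
    (hc_diag : ∀ y, c y y = 0)
    (f : X → Y) (hf : Measurable f)
    (μ ν : Measure X) [IsProbabilityMeasure μ] [IsProbabilityMeasure ν] :
    otCost c (μ.map f) (ν.map f) = otCost (fun x x' => c (f x) (f x')) μ ν :=
  otCost_map_eq_otCost_induced_general c hc_lsc f hf μ ν
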